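/- arXiv:2208.05940 — 2 statements merged into one kernel-verified Lean document; each statement's English description precedes it below -/
import Mathlib

section
/- Let M be an n×n complex matrix. The conjugation orbit {g M g⁻¹ : g ∈ GL_n(ℂ)} is a closed subset of the space of n×n complex matrices (with its natural topology) if and only if M is diagonalizable, i.e., there exist an invertible matrix P and a diagonal matrix D with M = P D P⁻¹. -/
open Matrix Polynomial Topology Filter

namespace Stmt6Aux

variable {n : ℕ}
local notation "𝕄" => Matrix (Fin n) (Fin n) ℂ

/-- Conjugation by a unit as an algebra homomorphism. -/
noncomputable def cjAlg (g : (Matrix (Fin n) (Fin n) ℂ)ˣ) : 𝕄 →ₐ[ℂ] 𝕄 where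
  toFun A := g.val * A * g.inv
  map_one' := by show g.val * 1 * g.inv = 1; rw [mul_one, g.val_inv]
  map_mul' A B := by
    show g.val * (A * B) * g.inv = (g.val * A * g.inv) * (g.val * B * g.inv)
    simp only [mul_assoc]
    rw [← mul_assoc g.inv g.val, g.inv_val, one_mul]
  map_zero' := by simp only [mul_zero, zero_mul]
  map_add' A B := by simp only [Matrix.add_mul, Matrix.mul_add]
  commutes' a := by
    show g.val * (algebraMap ℂ 𝕄 a) * g.inv = _
    rw [Algebra.algebraMap_eq_smul_one, mul_smul_comm, smul_mul_assoc, mul_one, g.val_inv]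

lemma cj_eq (g : (Matrix (Fin n) (Fin n) ℂ)ˣ) (A : 𝕄) :
    cjAlg g A = g.val * A * g.inv := rfl

lemma cj_cj (g h : (Matrix (Fin n) (Fin n) ℂ)ˣ) (A : 𝕄) :
    cjAlg g (cjAlg h A) = cjAlg (g * h) A := by
  simp only [cj_eq, Units.val_mul, Units.inv_mul_eq_iff_eq_mul]
  show g.val * (h.val * A * h.inv) * g.inv = g.val * h.val * A * (g * h).inv
  have : ((g * h).inv : 𝕄) = h.inv * g.inv := by
    show ((g * h)⁻¹ : (Matrix (Fin n) (Fin n) ℂ)ˣ).val = _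
    rw [_root_.mul_inv_rev, Units.val_mul]; rfl
  rw [this]
  simp only [mul_assoc]

lemma cj_cj_inv (g : (Matrix (Fin n) (Fin n) ℂ)ˣ) (A : 𝕄) :
    cjAlg g (cjAlg g⁻¹ A) = A := by
  rw [cj_cj, mul_inv_cancel]
  show (1 : (Matrix (Fin n) (Fin n) ℂ)ˣ).val * A * (1 : (Matrix (Fin n) (Fin n) ℂ)ˣ).inv = A
  simp only [Units.val_one, one_mul]
  show A * ((1 : (Matrix (Fin n) (Fin n) ℂ)ˣ)⁻¹).val = A
  rw [inv_one, Units.val_one, mul_one]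

lemma aeval_cj (g : (Matrix (Fin n) (Fin n) ℂ)ˣ) (A : 𝕄) (p : ℂ[X]) :
    Polynomial.aeval (cjAlg g A) p = cjAlg g (Polynomial.aeval A p) :=
  Polynomial.aeval_algHom_apply (cjAlg g) A p

lemma eval_cp (A : 𝕄) (x : ℂ) :
    (A.charpoly).eval x = (x • (1 : 𝕄) - A).det := by
  rw [Matrix.charpoly, ← Polynomial.coe_evalRingHom, RingHom.map_det]
  congr 1
  ext i j
  by_cases h : i = j <;> simp [h, charmatrix, Matrix.one_apply, Matrix.smul_apply]

lemma det_cj (g : (Matrix (Fin n) (Fin n) ℂ)ˣ) (A : 𝕄) (x : ℂ) :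
    (x • (1 : 𝕄) - cjAlg g A).det = (x • (1 : 𝕄) - A).det := by
  have h1 : x • (1 : 𝕄) - cjAlg g A = cjAlg g (x • 1 - A) := by
    rw [map_sub]
    congr 1
    rw [← Algebra.algebraMap_eq_smul_one (R := ℂ) (A := 𝕄), AlgHom.commutes]
  rw [h1, cj_eq, det_mul, det_mul, mul_comm, ← mul_assoc, ← det_mul]
  show ((g.inv * g.val : 𝕄).det * _ = _)
  rw [g.inv_val, det_one, one_mul]

lemma charpoly_cj (g : (Matrix (Fin n) (Fin n) ℂ)ˣ) (A : 𝕄) :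
    (cjAlg g A).charpoly = A.charpoly :=
  Polynomial.funext fun x => by rw [eval_cp, eval_cp, det_cj]

lemma aeval_diagonal (d : Fin n → ℂ) (p : ℂ[X]) :
    Polynomial.aeval (Matrix.diagonal d) p = Matrix.diagonal (fun i => p.eval (d i)) := by
  induction p using Polynomial.induction_on with
  | C a =>
      simp only [aeval_C, eval_C]
      ext i j
      by_cases h : i = j <;>
        simp [h, Algebra.algebraMap_eq_smul_one, Matrix.one_apply, Matrix.smul_apply]
  | add p q hp hq =>
      simp [hp, hq, Matrix.diagonal_add]
  | monomial m a h =>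
      simp only [_root_.map_mul, map_pow, aeval_C, aeval_X, eval_mul, eval_pow, eval_C,
        eval_X] at h ⊢
      rw [pow_succ, ← mul_assoc, h, Matrix.diagonal_mul_diagonal]
      ext i j
      rcases eq_or_ne i j with rfl | hij
      · simp only [Matrix.diagonal_apply_eq]; ring
      · simp [Matrix.diagonal_apply_ne _ hij]

lemma continuous_aeval_mat (p : ℂ[X]) :
    Continuous fun N : 𝕄 => Polynomial.aeval N p := by
  have : ∀ N : 𝕄, Polynomial.aeval N p
      = ∑ i ∈ Finset.range (p.natDegree + 1), p.coeff i • N ^ i := fun N => by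
    rw [Polynomial.aeval_eq_sum_range]
  simp only [this]
  exact continuous_finset_sum _ fun i _ => by fun_prop

lemma similar_basis (A : 𝕄) (b : Module.Basis (Fin n) ℂ (Fin n → ℂ)) :
    ∃ u : (Matrix (Fin n) (Fin n) ℂ)ˣ,
      A = u.val * (LinearMap.toMatrix b b (Matrix.toLin' A)) * u.inv := by
  classical
  set c := Pi.basisFun ℂ (Fin n)
  refine ⟨⟨c.toMatrix b, b.toMatrix c, Module.Basis.toMatrix_mul_toMatrix_flip c b,
    Module.Basis.toMatrix_mul_toMatrix_flip b c⟩, ?_⟩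
  show A = c.toMatrix b * (LinearMap.toMatrix b b (Matrix.toLin' A)) * b.toMatrix c
  rw [← Matrix.toLin_eq_toLin',
    basis_toMatrix_mul_linearMap_toMatrix_mul_basis_toMatrix,
    LinearMap.toMatrix_toLin]

lemma exists_diag_conj (A : 𝕄) {q : ℂ[X]} (hq : Squarefree q)
    (h0 : Polynomial.aeval A q = 0) :
    ∃ (u : (Matrix (Fin n) (Fin n) ℂ)ˣ) (d : Fin n → ℂ),
      A = u.val * Matrix.diagonal d * u.inv := by
  classical
  set f : Module.End ℂ (Fin n → ℂ) := Matrix.toLin' A with hfdef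
  have hf : Polynomial.aeval f q = 0 := by
    show Polynomial.aeval
      ((Matrix.toLinAlgEquiv'.toAlgHom : 𝕄 →ₐ[ℂ] Module.End ℂ (Fin n → ℂ)) A) q = 0
    rw [Polynomial.aeval_algHom_apply, h0, map_zero]
  have hss : f.IsSemisimple := Module.End.isSemisimple_of_squarefree_aeval_eq_zero hq hf
  have hfss := hss.isFinitelySemisimple
  have htop : ⨆ μ : ℂ, f.eigenspace μ = ⊤ := by
    have h1 := Module.End.iSup_maxGenEigenspace_eq_top f
    calc ⨆ μ : ℂ, f.eigenspace μ = ⨆ μ : ℂ, f.maxGenEigenspace μ := by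
          refine iSup_congr fun μ => (hfss.maxGenEigenspace_eq_eigenspace μ).symm
      _ = ⊤ := h1
  have hint : DirectSum.IsInternal f.eigenspace :=
    (DirectSum.isInternal_submodule_iff_iSupIndep_and_iSup_eq_top _).2
      ⟨f.eigenspaces_iSupIndep, htop⟩
  let w : ∀ μ : ℂ, Module.Basis (Module.Basis.ofVectorSpaceIndex ℂ (f.eigenspace μ)) ℂ (f.eigenspace μ) :=
    fun μ => Module.Basis.ofVectorSpace ℂ _
  let b0 := hint.collectedBasis w
  have : Fintype (Σ μ : ℂ, Module.Basis.ofVectorSpaceIndex ℂ (f.eigenspace μ)) :=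
    FiniteDimensional.fintypeBasisIndex b0
  have hcard : Fintype.card (Σ μ : ℂ, Module.Basis.ofVectorSpaceIndex ℂ (f.eigenspace μ)) = n := by
    rw [← Module.finrank_eq_card_basis b0, Module.finrank_fin_fun]
  let e := Fintype.equivFinOfCardEq hcard
  let b := b0.reindex e
  let d : Fin n → ℂ := fun i => (e.symm i).1
  have heig : ∀ i, f (b i) = d i • b i := fun i => by
    have hm := hint.collectedBasis_mem w (e.symm i)
    have hb : b i = b0 (e.symm i) := b0.reindex_apply e i
    rw [hb]
    exact Module.End.mem_eigenspace_iff.1 hm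
  have hD : LinearMap.toMatrix b b f = Matrix.diagonal d := by
    ext i j
    rw [LinearMap.toMatrix_apply, heig]
    rcases eq_or_ne i j with rfl | hij
    · simp [Module.Basis.repr_self]
    · simp [Matrix.diagonal_apply_ne _ hij, Module.Basis.repr_self, Finsupp.single_apply,
        (Ne.symm hij)]
  obtain ⟨u, hu⟩ := similar_basis A b
  exact ⟨u, d, by rw [hu, ← hfdef, hD]⟩

lemma univ_val_map_perm {m : ℕ} (σ : Equiv.Perm (Fin m)) :
    (Finset.univ.val : Multiset (Fin m)).map σ = Finset.univ.val := by
  have h := Finset.map_univ_equiv σ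
  calc (Finset.univ.val : Multiset (Fin m)).map σ
      = (Finset.univ.map σ.toEmbedding).val := rfl
    _ = Finset.univ.val := by rw [h]

lemma exists_perm_comp {α : Type*} :
    ∀ (m : ℕ) (d e : Fin m → α),
      Multiset.map d Finset.univ.val = Multiset.map e Finset.univ.val →
      ∃ σ : Equiv.Perm (Fin m), d = e ∘ σ := by
  intro m
  induction m with
  | zero => exact fun d e _ => ⟨1, funext fun i => i.elim0⟩
  | succ m ih =>
    intro d e h
    classical
    have hmem : d 0 ∈ Multiset.map e Finset.univ.val := by
      rw [← h]
      exact Multiset.mem_map_of_mem d (Finset.mem_univ_val (0 : Fin (m + 1)))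
    obtain ⟨k, -, hk⟩ := Multiset.mem_map.1 hmem
    set e' : Fin (m + 1) → α := e ∘ Equiv.swap 0 k with he'
    have he'univ : Multiset.map e' Finset.univ.val = Multiset.map e Finset.univ.val := by
      rw [he']
      calc Multiset.map (e ∘ Equiv.swap 0 k) Finset.univ.val
          = Multiset.map e (Finset.univ.val.map (Equiv.swap 0 k)) := by
            rw [Multiset.map_map]
        _ = Multiset.map e Finset.univ.val := by rw [univ_val_map_perm]
    have hcons : ∀ f : Fin (m + 1) → α,
        Multiset.map f Finset.univ.val
          = f 0 ::ₘ Multiset.map (f ∘ Fin.succ) Finset.univ.val := by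
      intro f
      rw [Fin.univ_succ, Finset.cons_val, Multiset.map_cons, Finset.map_val,
        Multiset.map_map]
      rfl
    have h0 : e' 0 = d 0 := by simp [he', hk]
    have htails : Multiset.map (d ∘ Fin.succ) Finset.univ.val
        = Multiset.map (e' ∘ Fin.succ) Finset.univ.val := by
      have := h.trans he'univ.symm
      rw [hcons d, hcons e', h0] at this
      exact (Multiset.cons_inj_right _).1 this
    obtain ⟨τ, hτ⟩ := ih (d ∘ Fin.succ) (e' ∘ Fin.succ) htails
    refine ⟨(Equiv.Perm.decomposeFin.symm (0, τ)).trans (Equiv.swap 0 k), funext fun i => ?_⟩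
    refine Fin.cases ?_ (fun x => ?_) i
    · simp [hk.symm]
    · have hx := congrFun hτ x
      simp only [Function.comp_apply] at hx ⊢
      simp only [Equiv.trans_apply, Equiv.Perm.decomposeFin_symm_apply_succ,
        Equiv.swap_self, Equiv.refl_apply]
      rw [hx]
      simp [he']

lemma charpoly_diag (d : Fin n → ℂ) :
    (Matrix.diagonal d).charpoly = ∏ i, (X - C (d i)) := by
  rw [Matrix.charpoly_of_upperTriangular _ (Matrix.blockTriangular_diagonal d)]
  simp

lemma multiset_eq_of_charpoly_eq {d e : Fin n → ℂ}
    (h : (Matrix.diagonal d).charpoly = (Matrix.diagonal e).charpoly) :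
    Multiset.map d Finset.univ.val = Multiset.map e Finset.univ.val := by
  rw [charpoly_diag, charpoly_diag] at h
  have hd : (∏ i, (X - C (d i))) = ((Finset.univ.val.map d).map fun a => X - C a).prod := by
    rw [Multiset.map_map]; rfl
  have he : (∏ i, (X - C (e i))) = ((Finset.univ.val.map e).map fun a => X - C a).prod := by
    rw [Multiset.map_map]; rfl
  have := congrArg Polynomial.roots (hd ▸ he ▸ h)
  rwa [Polynomial.roots_multiset_prod_X_sub_C, Polynomial.roots_multiset_prod_X_sub_C] at this

lemma diag_conj_diag {d e : Fin n → ℂ} (σ : Equiv.Perm (Fin n)) (hde : d = e ∘ σ) :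
    ∃ u : (Matrix (Fin n) (Fin n) ℂ)ˣ,
      Matrix.diagonal d = u.val * Matrix.diagonal e * u.inv := by
  classical
  set P₁ : 𝕄 := (1 : 𝕄).submatrix σ _root_.id with hP1
  set P₂ : 𝕄 := (1 : 𝕄).submatrix _root_.id σ with hP2
  have key : ∀ X Y : 𝕄, X.submatrix (σ : Fin n → Fin n) _root_.id * Y.submatrix _root_.id
      (σ : Fin n → Fin n) = (X * Y).submatrix σ σ :=
    fun X Y => (Matrix.submatrix_mul X Y σ _root_.id σ Function.bijective_id).symm
  have key2 : ∀ X Y : 𝕄, X.submatrix _root_.id (σ : Fin n → Fin n) * Y.submatrix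
      (σ : Fin n → Fin n) _root_.id = (X * Y).submatrix _root_.id _root_.id :=
    fun X Y => (Matrix.submatrix_mul X Y _root_.id σ _root_.id σ.bijective).symm
  have h12 : P₁ * P₂ = 1 := by
    rw [hP1, hP2, key, one_mul, Matrix.submatrix_one_equiv]
  have h21 : P₂ * P₁ = 1 := by
    rw [hP1, hP2, key2, one_mul, Matrix.submatrix_id_id]
  refine ⟨⟨P₁, P₂, h12, h21⟩, ?_⟩
  show Matrix.diagonal d = P₁ * Matrix.diagonal e * P₂
  have step1 : P₁ * Matrix.diagonal e = (Matrix.diagonal e).submatrix σ _root_.id := by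
    conv_lhs => rw [hP1, show Matrix.diagonal e = (Matrix.diagonal e).submatrix _root_.id
      _root_.id from (Matrix.submatrix_id_id _).symm]
    rw [show ((1 : 𝕄).submatrix (σ : Fin n → Fin n) _root_.id) *
      ((Matrix.diagonal e).submatrix _root_.id _root_.id) = _ from
      (Matrix.submatrix_mul 1 (Matrix.diagonal e) σ _root_.id _root_.id
        Function.bijective_id).symm, one_mul]
  have step2 : (Matrix.diagonal e).submatrix (σ : Fin n → Fin n) _root_.id * P₂
      = (Matrix.diagonal e).submatrix σ σ := by
    rw [hP2, show ((Matrix.diagonal e).submatrix (σ : Fin n → Fin n) _root_.id) *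
      ((1 : 𝕄).submatrix _root_.id (σ : Fin n → Fin n)) = _ from
      (Matrix.submatrix_mul (Matrix.diagonal e) 1 σ _root_.id σ
        Function.bijective_id).symm, mul_one]
  rw [step1, step2, Matrix.submatrix_diagonal_equiv, hde]

/-- The conjugation orbit. -/
def orb (M : 𝕄) : Set 𝕄 :=
  {N : 𝕄 | ∃ g : (Matrix (Fin n) (Fin n) ℂ)ˣ,
    N = (g : 𝕄) * M * ((g⁻¹ : (Matrix (Fin n) (Fin n) ℂ)ˣ) : 𝕄)}

lemma mem_orb_iff {M N : 𝕄} :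
    N ∈ orb M ↔ ∃ g : (Matrix (Fin n) (Fin n) ℂ)ˣ, N = cjAlg g M := Iff.rfl

lemma isClosed_orb_of_diag (M : 𝕄) (u : (Matrix (Fin n) (Fin n) ℂ)ˣ) (dM : Fin n → ℂ)
    (hM : M = cjAlg u (Matrix.diagonal dM)) : IsClosed (orb M) := by
  classical
  set s : Finset ℂ := Finset.image dM Finset.univ with hs
  set q : ℂ[X] := ∏ lam ∈ s, (X - C lam) with hq
  have hq_sf : Squarefree q := by
    have : q.Separable := Polynomial.separable_prod_X_sub_C_iff'.2 fun a _ b _ h => h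
    exact this.squarefree
  have hqdiag : Polynomial.aeval (Matrix.diagonal dM) q = 0 := by
    rw [aeval_diagonal]
    have : ∀ i, q.eval (dM i) = 0 := fun i => by
      rw [hq, Polynomial.eval_prod]
      refine Finset.prod_eq_zero (Finset.mem_image_of_mem dM (Finset.mem_univ i)) ?_
      simp
    ext i j
    rcases eq_or_ne i j with rfl | hij
    · simp [this]
    · simp [Matrix.diagonal_apply_ne _ hij]
  have hqM : Polynomial.aeval M q = 0 := by
    rw [hM, aeval_cj, hqdiag, map_zero]
  have horb : orb M = {N : 𝕄 | Polynomial.aeval N q = 0}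
      ∩ ⋂ x : ℂ, {N : 𝕄 | (x • (1 : 𝕄) - N).det = (x • (1 : 𝕄) - M).det} := by
    ext N
    constructor
    · rintro ⟨g, rfl⟩
      refine ⟨?_, ?_⟩
      · show Polynomial.aeval (cjAlg g M) q = 0
        rw [aeval_cj, hqM, map_zero]
      · refine Set.mem_iInter.2 fun x => ?_
        exact det_cj g M x
    · rintro ⟨hq0, hdet⟩
      have hcp : (N : 𝕄).charpoly = M.charpoly :=
        Polynomial.funext fun x => by
          rw [eval_cp, eval_cp]
          exact Set.mem_iInter.1 hdet x
      obtain ⟨v, dN, hN⟩ := exists_diag_conj N hq_sf hq0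
      have hcpd : (Matrix.diagonal dN).charpoly = (Matrix.diagonal dM).charpoly := by
        have h1 : (N : 𝕄).charpoly = (Matrix.diagonal dN).charpoly := by
          rw [hN]; exact charpoly_cj v _
        have h2 : M.charpoly = (Matrix.diagonal dM).charpoly := by
          rw [hM]; exact charpoly_cj u _
        rw [← h1, ← h2, hcp]
      obtain ⟨σ, hσ⟩ := exists_perm_comp n dN dM (multiset_eq_of_charpoly_eq hcpd)
      obtain ⟨w, hw⟩ := diag_conj_diag σ hσ
      refine ⟨v * w * u⁻¹, ?_⟩
      have hdM : Matrix.diagonal dM = cjAlg u⁻¹ M := by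
        rw [hM, cj_cj, inv_mul_cancel]
        show _ = (1 : (Matrix (Fin n) (Fin n) ℂ)ˣ).val * _ *
          ((1 : (Matrix (Fin n) (Fin n) ℂ)ˣ)⁻¹).val
        rw [inv_one, Units.val_one, one_mul, mul_one]
      show N = cjAlg (v * w * u⁻¹) M
      rw [← cj_cj, ← cj_cj, ← hdM, cj_eq w, ← hw, cj_eq v, ← hN]
  rw [horb]
  refine IsClosed.inter (isClosed_eq (continuous_aeval_mat q) continuous_const) ?_
  exact isClosed_iInter fun x =>
    isClosed_eq ((continuous_const.sub continuous_id).matrix_det) continuous_const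


section Forward

lemma cj_mem_orb {M : 𝕄} (g : (Matrix (Fin n) (Fin n) ℂ)ˣ) : cjAlg g M ∈ orb M :=
  mem_orb_iff.2 ⟨g, rfl⟩

lemma orb_eq_of_mem {M B : 𝕄} (h : B ∈ orb M) : orb B = orb M := by
  obtain ⟨g, rfl⟩ := mem_orb_iff.1 h
  ext N
  rw [mem_orb_iff, mem_orb_iff]
  constructor
  · rintro ⟨h, rfl⟩; exact ⟨h * g, cj_cj h g M⟩
  · rintro ⟨h, rfl⟩
    refine ⟨h * g⁻¹, ?_⟩
    rw [cj_cj, mul_assoc, inv_mul_cancel, mul_one]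

lemma cj_continuous (g : (Matrix (Fin n) (Fin n) ℂ)ˣ) :
    Continuous fun Y : 𝕄 => cjAlg g Y := by
  simp only [cj_eq]
  exact (continuous_const.mul continuous_id).mul continuous_const

lemma cj_mem_closure_orb {M X : 𝕄} (hX : X ∈ closure (orb M))
    (g : (Matrix (Fin n) (Fin n) ℂ)ˣ) : cjAlg g X ∈ closure (orb M) := by
  refine map_mem_closure (cj_continuous g) hX ?_
  intro Y hY
  obtain ⟨h, rfl⟩ := mem_orb_iff.1 hY
  exact mem_orb_iff.2 ⟨g * h, cj_cj g h M⟩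

lemma closure_orb_trans {M B : 𝕄} (hB : B ∈ closure (orb M)) :
    closure (orb B) ⊆ closure (orb M) := by
  refine closure_minimal ?_ isClosed_closure
  intro Y hY
  obtain ⟨g, rfl⟩ := mem_orb_iff.1 hY
  exact cj_mem_closure_orb hB g

section step
variable {m : ℕ}

lemma exists_col_zero (A : Matrix (Fin (m + 1)) (Fin (m + 1)) ℂ) :
    ∃ A₁ ∈ orb A, ∀ i : Fin (m + 1), i ≠ 0 → A₁ i 0 = 0 := by
  classical
  set f : Module.End ℂ (Fin (m + 1) → ℂ) := Matrix.toLin' A with hf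
  obtain ⟨μ, hμ⟩ := Module.End.exists_eigenvalue f
  obtain ⟨v, hv⟩ := hμ.exists_hasEigenvector
  have hv0 : v ≠ 0 := hv.right
  have hli : LinearIndepOn ℂ id ({v} : Set (Fin (m + 1) → ℂ)) :=
    LinearIndepOn.singleton (v := id) hv0
  let b'' := Module.Basis.extend hli
  haveI : Fintype (hli.extend (Set.subset_univ ({v} : Set (Fin (m + 1) → ℂ)))) :=
    FiniteDimensional.fintypeBasisIndex b''
  have hmem : v ∈ hli.extend (Set.subset_univ ({v} : Set (Fin (m + 1) → ℂ))) :=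
    hli.subset_extend _ rfl
  have hcard : Fintype.card (hli.extend (Set.subset_univ ({v} : Set (Fin (m + 1) → ℂ)))) = m + 1 := by
    rw [← Module.finrank_eq_card_basis b'', Module.finrank_fin_fun]
  let e0 := Fintype.equivFinOfCardEq hcard
  let e := e0.trans (Equiv.swap (e0 ⟨v, hmem⟩) 0)
  let b := b''.reindex e
  have hb0 : b 0 = v := by
    rw [Module.Basis.reindex_apply]
    have : e.symm 0 = ⟨v, hmem⟩ := by
      show e0.symm ((Equiv.swap (e0 ⟨v, hmem⟩) 0) 0) = ⟨v, hmem⟩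
      rw [Equiv.swap_apply_right, Equiv.symm_apply_apply]
    rw [this]
    simp [b'', Module.Basis.coe_extend]
  set A₁ := LinearMap.toMatrix b b f with hA₁
  obtain ⟨u, hu⟩ := similar_basis A b
  have hAu : A = cjAlg u A₁ := by rw [cj_eq, hA₁, hf]; exact hu
  have hmemo : A₁ ∈ orb A := by
    rw [mem_orb_iff]
    refine ⟨u⁻¹, ?_⟩
    have h2 := cj_cj_inv u⁻¹ A₁
    rw [inv_inv] at h2
    rw [hAu, h2]
  refine ⟨A₁, hmemo, fun i hi => ?_⟩
  rw [hA₁, LinearMap.toMatrix_apply, hb0, hv.apply_eq_smul, _root_.map_smul, ← hb0]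
  simp [Module.Basis.repr_self, Finsupp.single_apply, Ne.symm hi]

lemma limit_step (A₁ : Matrix (Fin (m + 1)) (Fin (m + 1)) ℂ)
    (hcol : ∀ i : Fin (m + 1), i ≠ 0 → A₁ i 0 = 0) :
    (Matrix.of fun i j : Fin (m + 1) =>
      if j = 0 then (if i = 0 then A₁ 0 0 else 0)
      else if i = 0 then 0 else A₁ i j) ∈ closure (orb A₁) := by
  classical
  set c : ℂ → Fin (m + 1) → ℂ := fun t i => if i = 0 then t else 1 with hc
  set c' : ℂ → Fin (m + 1) → ℂ := fun t i => if i = 0 then t⁻¹ else 1 with hc'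
  set F : ℂ → Matrix (Fin (m + 1)) (Fin (m + 1)) ℂ :=
    fun t => Matrix.diagonal (c t) * A₁ * Matrix.diagonal (c' t) with hF
  have hunit : ∀ t : ℂ, t ≠ 0 →
      Matrix.diagonal (c t) * Matrix.diagonal (c' t) = 1 ∧
      Matrix.diagonal (c' t) * Matrix.diagonal (c t) = 1 := by
    intro t ht
    constructor <;>
    · rw [Matrix.diagonal_mul_diagonal]
      ext i j
      rcases eq_or_ne i j with rfl | hij
      · rcases eq_or_ne i 0 with rfl | hi0
        · simp [hc, hc', Matrix.one_apply_eq, mul_inv_cancel₀ ht, inv_mul_cancel₀ ht]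
        · simp [hc, hc', Matrix.one_apply_eq, hi0]
      · simp [Matrix.diagonal_apply_ne _ hij, Matrix.one_apply_ne hij]
  have hmemF : ∀ᶠ t in 𝓝[≠] (0 : ℂ), F t ∈ orb A₁ := by
    filter_upwards [self_mem_nhdsWithin] with t ht
    exact mem_orb_iff.2 ⟨⟨Matrix.diagonal (c t), Matrix.diagonal (c' t),
      (hunit t ht).1, (hunit t ht).2⟩, by rw [cj_eq]⟩
  have hFentry : ∀ t i j, F t i j = c t i * A₁ i j * c' t j := by
    intro t i j
    rw [hF]
    simp [Matrix.diagonal_mul, Matrix.mul_diagonal]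
  refine mem_closure_of_tendsto ?_ hmemF
  refine tendsto_pi_nhds.2 ?_
  intro i
  rw [tendsto_pi_nhds]
  intro j
  have hentry : ∀ t, F t i j = c t i * A₁ i j * c' t j := fun t => hFentry t i j
  simp only [hentry]
  rcases eq_or_ne i 0 with rfl | hi
  · rcases eq_or_ne j 0 with rfl | hj
    · refine Filter.Tendsto.congr' ?_ (tendsto_const_nhds (x := A₁ 0 0))
      filter_upwards [self_mem_nhdsWithin] with t ht
      simp only [Matrix.of_apply, if_pos rfl, hc, hc']
      rw [mul_comm t (A₁ 0 0), mul_assoc, mul_inv_cancel₀ ht, mul_one]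
    · have hlim : Filter.Tendsto (fun t : ℂ => t * A₁ 0 j * 1) (𝓝[≠] (0 : ℂ))
          (𝓝 (0 * A₁ 0 j * 1)) := by
        exact (((tendsto_id.mono_left nhdsWithin_le_nhds).mul_const (A₁ 0 j)).mul_const 1)
      simp only [zero_mul, mul_one] at hlim
      have : (Matrix.of fun i j : Fin (m + 1) =>
          if j = 0 then (if i = 0 then A₁ 0 0 else 0)
          else if i = 0 then 0 else A₁ i j) 0 j = 0 := by
        simp [Matrix.of_apply, hj]
      rw [this]
      refine hlim.congr fun t => ?_
      simp [hc, hc', hj]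
  · have hci : ∀ t, c t i = 1 := fun t => by simp [hc, hi]
    rcases eq_or_ne j 0 with rfl | hj
    · have : ∀ t : ℂ, (1 : ℂ) * A₁ i 0 * c' t 0 = 0 := fun t => by
        rw [hcol i hi]; ring
      simp only [hci, this]
      have hgoal : (Matrix.of fun i j : Fin (m + 1) =>
          if j = 0 then (if i = 0 then A₁ 0 0 else 0)
          else if i = 0 then 0 else A₁ i j) i 0 = 0 := by
        simp [Matrix.of_apply, hi]
      rw [hgoal]
      exact tendsto_const_nhds
    · have hcj : ∀ t, c' t j = 1 := fun t => by simp [hc', hj]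
      simp only [hci, hcj, one_mul, mul_one]
      have hgoal : (Matrix.of fun i j : Fin (m + 1) =>
          if j = 0 then (if i = 0 then A₁ 0 0 else 0)
          else if i = 0 then 0 else A₁ i j) i j = A₁ i j := by
        simp [Matrix.of_apply, hi, hj]
      rw [hgoal]
      exact tendsto_const_nhds

end step

end Forward

section Emb


/-- `Fin 1 ⊕ Fin m ≃ Fin (m+1)`, sending `inl` to `0` and `inr j` to `j.succ`. -/
def se (m : ℕ) : Fin 1 ⊕ Fin m ≃ Fin (m + 1) where
  toFun := Sum.elim (fun _ => 0) Fin.succ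
  invFun := fun i => Fin.cases (Sum.inl 0) (fun j => Sum.inr j) i
  left_inv := by
    rintro (x | x)
    · simp [Subsingleton.elim x 0]
    · simp
  right_inv := fun i => by
    refine Fin.cases ?_ (fun j => ?_) i <;> simp

@[simp] lemma se_symm_zero : (se m).symm 0 = Sum.inl 0 := rfl
@[simp] lemma se_symm_succ (j : Fin m) : (se m).symm j.succ = Sum.inr j := by
  show Fin.cases (Sum.inl 0) (fun j => Sum.inr j) j.succ = Sum.inr j
  simp

/-- Embed an `m × m` matrix as the lower-right block, with `μ` in the top-left corner. -/
def emb (μ : ℂ) (C : Matrix (Fin m) (Fin m) ℂ) : Matrix (Fin (m + 1)) (Fin (m + 1)) ℂ :=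
  (Matrix.fromBlocks (Matrix.diagonal fun _ : Fin 1 => μ) 0 0 C).submatrix
    (se m).symm (se m).symm

lemma emb_mul (μ μ' : ℂ) (C C' : Matrix (Fin m) (Fin m) ℂ) :
    emb μ C * emb μ' C' = emb (μ * μ') (C * C') := by
  unfold emb
  rw [Matrix.submatrix_mul_equiv]
  simp [Matrix.fromBlocks_multiply]

lemma emb_one : emb 1 (1 : Matrix (Fin m) (Fin m) ℂ) = 1 := by
  unfold emb
  rw [show (Matrix.diagonal fun _ : Fin 1 => (1 : ℂ)) = 1 from Matrix.diagonal_one,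
    Matrix.fromBlocks_one, Matrix.submatrix_one_equiv]

lemma emb_continuous (μ : ℂ) : Continuous fun C : Matrix (Fin m) (Fin m) ℂ => emb μ C := by
  refine continuous_matrix fun i j => ?_
  unfold emb
  simp only [Matrix.submatrix_apply]
  rcases h1 : (se m).symm i with x | x <;> rcases h2 : (se m).symm j with y | y
  · simp only [Matrix.fromBlocks_apply₁₁]; exact continuous_const
  · simp only [Matrix.fromBlocks_apply₁₂]; exact continuous_const
  · simp only [Matrix.fromBlocks_apply₂₁]; exact continuous_const
  · simp only [Matrix.fromBlocks_apply₂₂]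
    exact (continuous_apply y).comp (continuous_apply x)

lemma emb_diag (μ : ℂ) (d' : Fin m → ℂ) :
    emb μ (Matrix.diagonal d')
      = Matrix.diagonal (fun i => Sum.elim (fun _ : Fin 1 => μ) d' ((se m).symm i)) := by
  unfold emb
  rw [Matrix.fromBlocks_diagonal, Matrix.submatrix_diagonal_equiv]
  rfl

lemma emb_orb {m : ℕ} (μ : ℂ) (B Y : Matrix (Fin m) (Fin m) ℂ) (hY : Y ∈ orb B) :
    emb μ Y ∈ orb (emb μ B) := by
  obtain ⟨w, rfl⟩ := mem_orb_iff.1 hY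
  refine mem_orb_iff.2 ⟨⟨emb 1 w.val, emb 1 w.inv, ?_, ?_⟩, ?_⟩
  · rw [emb_mul, w.val_inv, one_mul, emb_one]
  · rw [emb_mul, w.inv_val, one_mul, emb_one]
  · rw [cj_eq, cj_eq]
    show emb μ (w.val * B * w.inv) = emb 1 w.val * emb μ B * emb 1 w.inv
    rw [emb_mul, emb_mul, one_mul, mul_one]

lemma exists_diag_closure : ∀ (m : ℕ) (A : Matrix (Fin m) (Fin m) ℂ),
    ∃ d : Fin m → ℂ, Matrix.diagonal d ∈ closure (orb A) := by
  intro m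
  induction m with
  | zero =>
    intro A
    refine ⟨fun i => i.elim0, subset_closure ⟨1, ?_⟩⟩
    apply Subsingleton.elim
  | succ m ih =>
    intro A
    obtain ⟨A₁, hA₁mem, hcol⟩ := exists_col_zero A
    set A₂ : Matrix (Fin (m + 1)) (Fin (m + 1)) ℂ := Matrix.of fun i j : Fin (m + 1) =>
      if j = 0 then (if i = 0 then A₁ 0 0 else 0)
      else if i = 0 then 0 else A₁ i j with hA₂def
    have hA₂ : A₂ ∈ closure (orb A₁) := limit_step A₁ hcol
    have hA₂' : A₂ ∈ closure (orb A) := by rwa [orb_eq_of_mem hA₁mem] at hA₂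
    set B : Matrix (Fin m) (Fin m) ℂ := A₁.submatrix Fin.succ Fin.succ with hBdef
    have hA₂emb : A₂ = emb (A₁ 0 0) B := by
      ext i j
      show A₂ i j = (Matrix.fromBlocks (Matrix.diagonal fun _ : Fin 1 => (A₁ 0 0)) 0 0 B).submatrix
        (se (m)).symm (se (m)).symm i j
      rw [Matrix.submatrix_apply]
      refine Fin.cases ?_ (fun i' => ?_) i <;> refine Fin.cases ?_ (fun j' => ?_) j
      · simp [hA₂def]
      · simp [hA₂def, Fin.succ_ne_zero]
      · simp [hA₂def, Fin.succ_ne_zero, hcol _ (Fin.succ_ne_zero i')]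
      · simp [hA₂def, Fin.succ_ne_zero, hBdef]
    obtain ⟨d', hd'⟩ := ih B
    have h1 : emb (A₁ 0 0) (Matrix.diagonal d') ∈ closure (orb A₂) := by
      rw [hA₂emb]
      exact map_mem_closure (emb_continuous _) hd' (fun Y hY => emb_orb _ _ Y hY)
    refine ⟨fun i => Sum.elim (fun _ : Fin 1 => A₁ 0 0) d' ((se m).symm i), ?_⟩
    rw [← emb_diag]
    exact closure_orb_trans hA₂' h1

end Emb

end Stmt6Aux

open Matrix

/-- The conjugation orbit `{g M g⁻¹}` of an `n×n` complex matrix `M` is closed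
iff `M` is diagonalizable, i.e. `M = P D P⁻¹` with `P` invertible and `D` diagonal. -/
theorem stmt6 (n : ℕ) (M : Matrix (Fin n) (Fin n) ℂ) :
    IsClosed {N : Matrix (Fin n) (Fin n) ℂ |
        ∃ g : (Matrix (Fin n) (Fin n) ℂ)ˣ,
          N = (g : Matrix (Fin n) (Fin n) ℂ) * M * ((g⁻¹ : _) : Matrix (Fin n) (Fin n) ℂ)} ↔
      ∃ P : Matrix (Fin n) (Fin n) ℂ, IsUnit P ∧
        ∃ D : Matrix (Fin n) (Fin n) ℂ, D.IsDiag ∧ M = P * D * P⁻¹ := by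
  have horb : {N : Matrix (Fin n) (Fin n) ℂ |
        ∃ g : (Matrix (Fin n) (Fin n) ℂ)ˣ,
          N = (g : Matrix (Fin n) (Fin n) ℂ) * M * ((g⁻¹ : _) : Matrix (Fin n) (Fin n) ℂ)}
      = Stmt6Aux.orb M := rfl
  rw [horb]
  constructor
  · intro hcl
    obtain ⟨d, hd⟩ := Stmt6Aux.exists_diag_closure n M
    have hmem : Matrix.diagonal d ∈ Stmt6Aux.orb M := by rwa [hcl.closure_eq] at hd
    obtain ⟨g, hg⟩ := Stmt6Aux.mem_orb_iff.1 hmem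
    refine ⟨((g⁻¹ : (Matrix (Fin n) (Fin n) ℂ)ˣ) : Matrix (Fin n) (Fin n) ℂ),
      (g⁻¹).isUnit, Matrix.diagonal d, Matrix.isDiag_diagonal d, ?_⟩
    have hMval : M = Stmt6Aux.cjAlg g⁻¹ (Matrix.diagonal d) := by
      rw [hg]
      have h2 := Stmt6Aux.cj_cj_inv g⁻¹ M
      rw [inv_inv] at h2
      exact h2.symm
    rw [hMval, Stmt6Aux.cj_eq]
    congr 1
    rw [show ((g⁻¹ : (Matrix (Fin n) (Fin n) ℂ)ˣ).inv)
      = (((g⁻¹)⁻¹ : (Matrix (Fin n) (Fin n) ℂ)ˣ) : Matrix (Fin n) (Fin n) ℂ) from rfl,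
      Matrix.coe_units_inv]
  · rintro ⟨P, hP, D, hD, hM⟩
    refine Stmt6Aux.isClosed_orb_of_diag M hP.unit D.diag ?_
    rw [Stmt6Aux.cj_eq]
    have h1 : (hP.unit : Matrix (Fin n) (Fin n) ℂ) = P := hP.unit_spec
    have h2 : (hP.unit.inv : Matrix (Fin n) (Fin n) ℂ) = P⁻¹ := by
      show ((hP.unit⁻¹ : (Matrix (Fin n) (Fin n) ℂ)ˣ) : Matrix (Fin n) (Fin n) ℂ) = P⁻¹
      rw [Matrix.coe_units_inv, h1]
    rw [h1, h2, hD.diagonal_diag, hM]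
end

section
/- Let P : Matrix n n ℂ → ℂ be a polynomial function of the matrix entries (the evaluation of a multivariate polynomial in the n² entries) which is invariant under conjugation: P(g M g⁻¹) = P(M) for all M ∈ Matrix n n ℂ and all invertible g. Then there exists a polynomial Q in n variables such that P(M) = Q(c_0(M), c_1(M), ..., c_{n-1}(M)) for all M, where c_0(M), ..., c_{n-1}(M) are the coefficients of the characteristic polynomial of M. -/
/-!
On diagonal matrices a conjugation-invariant polynomial `P` restricts to a polynomial `S` in the
diagonal entries which is symmetric, because permutation matrices are invertible. By the
fundamental theorem on symmetric polynomials, `S` is a polynomial `Q` in the coefficients of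
`∏ (X - vᵢ)`, the characteristic polynomial of `diagonal v`. A matrix with distinct eigenvalues
is conjugate to a diagonal one, so `P` and `Q ∘ charpoly coefficients` agree on it.

The same theorem applied to the discriminant `det (vandermonde X) ^ 2` gives a polynomial `G` in
the matrix entries which is not zero and vanishes at every matrix whose eigenvalues are not
distinct. Hence `(P - Q ∘ charpoly coefficients) * G = 0` in the polynomial ring of the entries,
which is a domain.
-/

open Matrix MvPolynomial

theorem Multiset.exists_map_univ_val_eq {α : Type*} {n : ℕ} (s : Multiset α)
    (hs : Multiset.card s = n) : ∃ f : Fin n → α, Finset.univ.val.map f = s := by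
  have hlen : s.toList.length = n := by rw [Multiset.length_toList, hs]
  refine ⟨fun i => s.toList.get (i.cast hlen.symm), ?_⟩
  rw [Fin.univ_val_map, ← List.ofFn_congr hlen, List.ofFn_get, Multiset.coe_toList]

namespace MvPolynomial

variable {R σ τ : Type*}

section CommSemiring

variable [CommSemiring R]

theorem eval_aeval (x : τ → R) (g : σ → MvPolynomial τ R) (q : MvPolynomial σ R) :
    eval x (aeval g q) = eval (fun s => eval x (g s)) q := by
  rw [aeval_eq_bind₁]
  exact eval₂Hom_bind₁ _ _ _ _

theorem exists_eval_eq_eval_diagonal [DecidableEq σ] (p : MvPolynomial (σ × σ) R) :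
    ∃ S : MvPolynomial σ R, ∀ v : σ → R,
      eval v S = eval (fun ij : σ × σ => diagonal v ij.1 ij.2) p := by
  refine ⟨aeval (fun ij : σ × σ => diagonal X ij.1 ij.2) p, fun v => ?_⟩
  rw [eval_aeval]
  congr 2 with ij
  rw [diagonal_apply, diagonal_apply, apply_ite (eval v), eval_X, map_zero]

end CommSemiring

variable [CommRing R]

theorem isSymmetric_of_eval_comp [IsDomain R] [Infinite R] {S : MvPolynomial σ R}
    (h : ∀ (v : σ → R) (e : Equiv.Perm σ), eval (v ∘ e) S = eval v S) : S.IsSymmetric :=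
  fun e => MvPolynomial.funext fun v => by rw [eval_rename, h]

theorem eval_esymm_eq_coeff_prod_X_sub_C [Fintype σ] (v : σ → R) {m : ℕ}
    (hm : m ≤ Fintype.card σ) :
    eval v (esymm σ R m) =
      (-1) ^ m * (∏ i, (Polynomial.X - Polynomial.C (v i))).coeff (Fintype.card σ - m) := by
  have h := (Finset.univ.val.map v).prod_X_sub_C_coeff (k := Fintype.card σ - m) (by simp)
  simp only [Multiset.card_map, Finset.card_val, Finset.card_univ,
    Nat.sub_sub_self hm, Multiset.map_map, Function.comp_def] at h
  rw [Finset.prod_eq_multiset_prod, h, ← mul_assoc, ← pow_add,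
    ← two_mul, pow_mul, neg_one_sq, one_pow, one_mul]
  exact aeval_esymm_eq_multiset_esymm σ R m v

theorem IsSymmetric.exists_eval_eq_eval_coeff_prod_X_sub_C {n : ℕ}
    {S : MvPolynomial (Fin n) R} (hS : S.IsSymmetric) :
    ∃ Q : MvPolynomial (Fin n) R, ∀ v : Fin n → R,
      eval v S = eval (fun i => (∏ j, (Polynomial.X - Polynomial.C (v j))).coeff i) Q := by
  obtain ⟨T, hT⟩ := esymmAlgHom_surjective R (Fintype.card_fin n).le ⟨S, hS⟩
  have hST : S = aeval (fun i : Fin n => esymm (Fin n) R (i + 1)) T :=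
    (congrArg Subtype.val hT).symm.trans (esymmAlgHom_apply T)
  -- `esymm (i + 1)` is `(-1) ^ (i + 1)` times the coefficient of `X ^ (n - (i + 1))`
  refine ⟨aeval (fun i : Fin n => MvPolynomial.C ((-1) ^ (i + 1 : ℕ)) * X i.rev) T,
    fun v => ?_⟩
  rw [hST, eval_aeval, eval_aeval]
  congr 2 with i
  rw [eval_esymm_eq_coeff_prod_X_sub_C v (by simp)]
  simp [Fin.val_rev]

noncomputable def sqDetVandermonde (n : ℕ) (R : Type*) [CommRing R] : MvPolynomial (Fin n) R :=
  (vandermonde X).det ^ 2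

theorem eval_sqDetVandermonde {n : ℕ} (v : Fin n → R) :
    eval v (sqDetVandermonde n R) = (vandermonde v).det ^ 2 := by
  rw [sqDetVandermonde, map_pow, RingHom.map_det]
  congr 2
  ext i j
  simp [vandermonde_apply]

theorem isSymmetric_sqDetVandermonde (n : ℕ) : (sqDetVandermonde n R).IsSymmetric := by
  intro e
  have hV : (rename e).mapMatrix (vandermonde X) =
      (vandermonde (X : Fin n → MvPolynomial (Fin n) R)).submatrix e id := by
    ext i j
    simp [vandermonde_apply]
  rw [sqDetVandermonde, map_pow, AlgHom.map_det, hV, det_permute, mul_pow, ← Int.cast_pow,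
    ← Units.val_pow_eq_pow_val, Int.units_sq, Units.val_one, Int.cast_one, one_mul]

end MvPolynomial

namespace Matrix

variable {ι R K : Type*} [Fintype ι] [DecidableEq ι]

theorem eval_aeval_charpoly_univ_coeff [CommRing R] {n : ℕ} (M : Matrix (Fin n) (Fin n) R)
    (Q : MvPolynomial (Fin n) R) :
    eval (fun ij : Fin n × Fin n => M ij.1 ij.2)
        (aeval (fun i : Fin n => (charpoly.univ R (Fin n)).coeff i) Q) =
      eval (fun i : Fin n => M.charpoly.coeff i) Q := by
  rw [eval_aeval]
  congr 2 with i
  exact charpoly.univ_coeff_eval₂Hom (Fin n) (RingHom.id R) _ i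

theorem exists_conj_diagonal_eq_diagonal_comp [CommRing R] (v : ι → R) (e : Equiv.Perm ι) :
    ∃ g : (Matrix ι ι R)ˣ, (g : Matrix ι ι R) * diagonal v * (g⁻¹ : (Matrix ι ι R)ˣ) =
      diagonal (v ∘ e) := by
  refine ⟨⟨e.permMatrix R, e⁻¹.permMatrix R, ?_, ?_⟩, ?_⟩
  · rw [← permMatrix_mul, inv_mul_cancel, permMatrix_one]
  · rw [← permMatrix_mul, mul_inv_cancel, permMatrix_one]
  · rw [Units.inv_mk, Units.val_mk, PEquiv.toMatrix_toPEquiv_mul, PEquiv.mul_toMatrix_toPEquiv]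
    exact submatrix_diagonal_equiv v e

theorem exists_charpoly_eq_prod_X_sub_C [Field K] [IsAlgClosed K] {n : ℕ}
    (M : Matrix (Fin n) (Fin n) K) :
    ∃ μ : Fin n → K, M.charpoly = ∏ i, (Polynomial.X - Polynomial.C (μ i)) := by
  have hsplit : M.charpoly.Splits := IsAlgClosed.splits _
  obtain ⟨μ, hμ⟩ := M.charpoly.roots.exists_map_univ_val_eq <| by
    rw [Polynomial.splits_iff_card_roots.mp hsplit, charpoly_natDegree_eq_dim, Fintype.card_fin]
  refine ⟨μ, ?_⟩
  rw [hsplit.eq_prod_roots_of_monic M.charpoly_monic, ← hμ, Multiset.map_map]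
  rfl

theorem exists_conj_eq_diagonal_of_charpoly_eq_prod [Field K] {M : Matrix ι ι K} {μ : ι → K}
    (hμ : Function.Injective μ) (hM : M.charpoly = ∏ i, (Polynomial.X - Polynomial.C (μ i))) :
    ∃ g : (Matrix ι ι K)ˣ,
      (g : Matrix ι ι K) * M * (g⁻¹ : (Matrix ι ι K)ˣ) = diagonal μ := by
  have hev : ∀ i, Module.End.HasEigenvalue (toLin' M) (μ i) := fun i => by
    rw [Module.End.hasEigenvalue_iff_isRoot_charpoly, charpoly_toLin', hM, Polynomial.IsRoot,
      Polynomial.eval_prod]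
    exact Finset.prod_eq_zero (Finset.mem_univ i) (by simp)
  choose w hw using fun i => (hev i).exists_hasEigenvector
  let b : Module.Basis ι K (ι → K) := basisOfLinearIndependentOfCardEqFinrank' w
    (Module.End.eigenvectors_linearIndependent' _ μ hμ w hw) (by simp)
  have hb : LinearMap.toMatrix b b (toLin' M) = diagonal μ := by
    ext i j
    have hbj : toLin' M (b j) = μ j • b j := by
      simpa [b] using (hw j).apply_eq_smul
    rw [LinearMap.toMatrix_apply, hbj, map_smul, b.repr_self]
    obtain rfl | hij := eq_or_ne i j <;> simp [*]
  refine ⟨⟨b.toMatrix (Pi.basisFun K ι), (Pi.basisFun K ι).toMatrix b,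
    b.toMatrix_mul_toMatrix_flip _, Module.Basis.toMatrix_mul_toMatrix_flip _ _⟩, ?_⟩
  rw [← hb, ← basis_toMatrix_mul_linearMap_toMatrix_mul_basis_toMatrix b (Pi.basisFun K ι) b
      (Pi.basisFun K ι), LinearMap.toMatrix_eq_toMatrix', LinearMap.toMatrix'_toLin', Units.inv_mk]

section ConjInvariant

variable [Field K]

theorem isSymmetric_of_eval_eq_diagonal [Infinite K] (P : Matrix ι ι K → K)
    (hP : ∀ (M : Matrix ι ι K) (g : (Matrix ι ι K)ˣ),
      P (g * M * (g⁻¹ : (Matrix ι ι K)ˣ)) = P M)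
    {S : MvPolynomial ι K} (hS : ∀ v, eval v S = P (diagonal v)) : S.IsSymmetric :=
  isSymmetric_of_eval_comp fun v e => by
    obtain ⟨g, hg⟩ := exists_conj_diagonal_eq_diagonal_comp v e
    rw [hS, hS, ← hg, hP]

theorem sub_mul_eval_sqDetVandermonde_eq_zero {n : ℕ} (P : Matrix (Fin n) (Fin n) K → K)
    (hP : ∀ (M : Matrix (Fin n) (Fin n) K) (g : (Matrix (Fin n) (Fin n) K)ˣ),
      P (g * M * (g⁻¹ : (Matrix (Fin n) (Fin n) K)ˣ)) = P M)
    {Q : MvPolynomial (Fin n) K}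
    (hQ : ∀ v, P (diagonal v) =
      eval (fun i => (∏ j, (Polynomial.X - Polynomial.C (v j))).coeff i) Q)
    {M : Matrix (Fin n) (Fin n) K} {μ : Fin n → K}
    (hM : M.charpoly = ∏ i, (Polynomial.X - Polynomial.C (μ i))) :
    (P M - eval (fun i : Fin n => M.charpoly.coeff i) Q) * eval μ (sqDetVandermonde n K) = 0 := by
  by_cases hμ : Function.Injective μ
  · obtain ⟨g, hg⟩ := exists_conj_eq_diagonal_of_charpoly_eq_prod hμ hM
    rw [← hP M g, hg, hQ, hM, sub_self, zero_mul]
  · simp [eval_sqDetVandermonde, not_not.mp (mt det_vandermonde_ne_zero_iff.mp hμ)]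

end ConjInvariant

end Matrix

/-- Every conjugation-invariant polynomial function on `n×n` complex matrices
is a polynomial in the coefficients of the characteristic polynomial. -/
theorem stmt7 (n : ℕ) (P : Matrix (Fin n) (Fin n) ℂ → ℂ)
    (hpoly : ∃ p : MvPolynomial (Fin n × Fin n) ℂ,
      ∀ M : Matrix (Fin n) (Fin n) ℂ,
        P M = MvPolynomial.eval (fun ij : Fin n × Fin n => M ij.1 ij.2) p)
    (hinv : ∀ (M : Matrix (Fin n) (Fin n) ℂ) (g : (Matrix (Fin n) (Fin n) ℂ)ˣ),
      P ((g : Matrix (Fin n) (Fin n) ℂ) * M * ((g⁻¹ : _) : Matrix (Fin n) (Fin n) ℂ)) = P M) :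
    ∃ Q : MvPolynomial (Fin n) ℂ,
      ∀ M : Matrix (Fin n) (Fin n) ℂ,
        P M = MvPolynomial.eval (fun i : Fin n => (Matrix.charpoly M).coeff i) Q := by
  obtain ⟨p, hp⟩ := hpoly
  obtain ⟨S, hS⟩ := exists_eval_eq_eval_diagonal p
  simp_rw [← hp] at hS
  obtain ⟨Q, hQ⟩ :=
    (isSymmetric_of_eval_eq_diagonal P hinv hS).exists_eval_eq_eval_coeff_prod_X_sub_C
  obtain ⟨D, hD⟩ :=
    (isSymmetric_sqDetVandermonde (R := ℂ) n).exists_eval_eq_eval_coeff_prod_X_sub_C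
  let c := fun i : Fin n => (charpoly.univ ℂ (Fin n)).coeff i
  have hvanish : (p - aeval c Q) * aeval c D = 0 := MvPolynomial.funext fun x => by
    obtain ⟨μ, hμ⟩ := exists_charpoly_eq_prod_X_sub_C (of (Function.curry x))
    have h := sub_mul_eval_sqDetVandermonde_eq_zero P hinv (fun v => (hS v).symm.trans (hQ v)) hμ
    rw [hD, ← hμ, ← eval_aeval_charpoly_univ_coeff, ← eval_aeval_charpoly_univ_coeff, hp]
      at h
    simpa using h
  have hD0 : aeval c D ≠ 0 := fun h => by
    obtain ⟨w, hw⟩ : ∃ w : Fin n → ℂ, Function.Injective w :=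
      ⟨_, (Infinite.natEmbedding ℂ).injective.comp Fin.val_injective⟩
    have h' := congrArg (eval fun ij : Fin n × Fin n => diagonal w ij.1 ij.2) h
    rw [eval_aeval_charpoly_univ_coeff, charpoly_diagonal, ← hD, eval_sqDetVandermonde,
      map_zero] at h'
    exact det_vandermonde_ne_zero_iff.mpr hw (pow_eq_zero_iff two_ne_zero |>.mp h')
  refine ⟨Q, fun M => ?_⟩
  rw [hp, ← eval_aeval_charpoly_univ_coeff,
    sub_eq_zero.mp ((mul_eq_zero.mp hvanish).resolve_right hD0)]
end
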